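/- Let q ≥ 2 and d be positive integers. Define the coefficients of the formal power series (u^d/(1+u^d))·(1-qu²)(1+u)/(1-qu) in ℚ[[u]]. Then for m ≥ d+3, the coefficient of u^m equals ((1-q^{-2})/(1+q^{-d}))·q^{m-d} + E_m where |E_m| is bounded by a constant depending only on q and d (not on m). -/

import Mathlib

/-!
Partial fractions. Put `P = X^d (1 - qX²)(1 + X)` and `D = 1 + X^d`. For `a = P(1/q) / D(1/q)`
the polynomial `P - a D` vanishes at `1/q`, so `P = a D + (1 - qX) Q` for a polynomial `Q`, and the
series is `a / (1 - qX) + Q / D`. The first summand has coefficients `a q^m`, which is exactly the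
main term; the coefficients of `1 / (1 + X^d)` lie in `{-1, 0, 1}`, so those of `Q / D` are bounded.
-/

open PowerSeries

theorem Polynomial.exists_eq_C_mul_add_X_sub_C_mul {K : Type*} [Field K] (p D : Polynomial K)
    {r : K} (hD : D.eval r ≠ 0) :
    ∃ Q : Polynomial K,
      p = Polynomial.C (p.eval r / D.eval r) * D + (Polynomial.X - Polynomial.C r) * Q := by
  refine ⟨(p - Polynomial.C (p.eval r / D.eval r) * D) /ₘ (Polynomial.X - Polynomial.C r), ?_⟩
  rw [Polynomial.mul_divByMonic_eq_iff_isRoot.mpr]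
  · ring
  · simp [Polynomial.IsRoot, hD]

namespace PowerSeries

variable {R K : Type*}

theorem mk_pow_mul_one_sub_C_mul_X [CommRing R] (c : R) : mk (c ^ ·) * (1 - C c * X) = 1 := by
  have h := congrArg (rescale c) (mk_one_mul_one_sub_eq_one R)
  have hmk : rescale c (mk 1) = mk (c ^ ·) := by ext n; simp [coeff_rescale]
  simpa [hmk, rescale_X] using h

theorem coeff_inv_one_sub_C_mul_X [Field K] (c : K) (n : ℕ) :
    coeff n (1 - C c * X)⁻¹ = c ^ n := by
  rw [inv_eq_iff_mul_eq_one (by simp) |>.mpr (mk_pow_mul_one_sub_C_mul_X c), coeff_mk]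

theorem abs_coeff_inv_one_add_X_pow_le_one [Field K] [LinearOrder K] [IsStrictOrderedRing K]
    {d : ℕ} (hd : 0 < d) (n : ℕ) : |coeff n (1 + X ^ d : K⟦X⟧)⁻¹| ≤ 1 := by
  set f : K⟦X⟧ := (1 + X ^ d)⁻¹
  have hf : f * (1 + X ^ d) = 1 := PowerSeries.inv_mul_cancel _ (by simp [hd.ne'])
  have hrec (n : ℕ) :
      coeff n f + (if d ≤ n then coeff (n - d) f else 0) = if n = 0 then 1 else 0 := by
    have h := congrArg (coeff n) hf
    rwa [mul_add, mul_one, map_add, mul_comm, coeff_X_pow_mul', coeff_one] at h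
  induction n using Nat.strong_induction_on with
  | _ n ih =>
    have h := hrec n
    by_cases hn : d ≤ n
    · rw [if_pos hn, if_neg (by omega)] at h
      rw [eq_neg_of_add_eq_zero_left h, abs_neg]
      exact ih _ (by omega)
    · rw [if_neg hn, add_zero] at h
      rw [h]
      split_ifs <;> simp

def HasBoundedCoeffs [Ring R] [LinearOrder R] (f : R⟦X⟧) : Prop :=
  ∃ B, ∀ n, |coeff n f| ≤ B

theorem HasBoundedCoeffs.coe_mul [CommRing R] [LinearOrder R] [IsStrictOrderedRing R]
    {f : R⟦X⟧} (hf : HasBoundedCoeffs f) (p : Polynomial R) :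
    HasBoundedCoeffs ((p : R⟦X⟧) * f) := by
  obtain ⟨B, hB⟩ := hf
  induction p using Polynomial.induction_on' with
  | add p q hp hq =>
    obtain ⟨Bp, hBp⟩ := hp
    obtain ⟨Bq, hBq⟩ := hq
    refine ⟨Bp + Bq, fun n => ?_⟩
    rw [Polynomial.coe_add, add_mul, map_add]
    exact (abs_add_le _ _).trans (add_le_add (hBp n) (hBq n))
  | monomial k c =>
    refine ⟨|c| * B, fun n => ?_⟩
    rw [← Polynomial.C_mul_X_pow_eq_monomial, Polynomial.coe_mul, Polynomial.coe_C,
      Polynomial.coe_pow, Polynomial.coe_X, mul_assoc, coeff_C_mul, coeff_X_pow_mul', abs_mul]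
    split_ifs
    · exact mul_le_mul_of_nonneg_left (hB _) (abs_nonneg c)
    · simpa using mul_nonneg (abs_nonneg c) ((abs_nonneg _).trans (hB 0))

theorem exists_coe_mul_inv_mul_inv_one_sub_C_mul_X_eq [Field K] (p D : Polynomial K) {c : K}
    (hc : c ≠ 0) (hD : D.eval c⁻¹ ≠ 0) (hD0 : D.coeff 0 ≠ 0) :
    ∃ Q : Polynomial K, (p : K⟦X⟧) * (D : K⟦X⟧)⁻¹ * (1 - C c * X)⁻¹ =
      C (p.eval c⁻¹ / D.eval c⁻¹) * (1 - C c * X)⁻¹ + (Q : K⟦X⟧) * (D : K⟦X⟧)⁻¹ := by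
  obtain ⟨Q, hQ⟩ := p.exists_eq_C_mul_add_X_sub_C_mul D hD
  set a := p.eval c⁻¹ / D.eval c⁻¹
  set Q' : Polynomial K := -Polynomial.C c⁻¹ * Q
  refine ⟨Q', ?_⟩
  have hp : (p : K⟦X⟧) = C a * (D : K⟦X⟧) + (1 - C c * X) * (Q' : K⟦X⟧) := by
    have hcc : C c⁻¹ * C c = (1 : K⟦X⟧) := by rw [← map_mul, inv_mul_cancel₀ hc, map_one]
    conv_lhs => rw [hQ]
    push_cast [Q']
    linear_combination (-X * (Q : K⟦X⟧)) * hcc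
  have hDD : (D : K⟦X⟧) * (D : K⟦X⟧)⁻¹ = 1 := PowerSeries.mul_inv_cancel _ (by simpa using hD0)
  have hGG : (1 - C c * X) * (1 - C c * X)⁻¹ = 1 := PowerSeries.mul_inv_cancel _ (by simp)
  linear_combination (D : K⟦X⟧)⁻¹ * (1 - C c * X)⁻¹ * hp + C a * (1 - C c * X)⁻¹ * hDD +
    (Q' : K⟦X⟧) * (D : K⟦X⟧)⁻¹ * hGG

end PowerSeries

/-- In `ℚ⟦u⟧`, the coefficient of `u^m` in `(u^d/(1+u^d))·(1-qu²)(1+u)/(1-qu)`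
equals `((1-q⁻²)/(1+q^{-d}))·q^{m-d}` up to an error bounded uniformly in `m`,
for all `m ≥ d + 3`. -/
theorem stmt18 (q d : ℕ) (hq : 2 ≤ q) (hd : 1 ≤ d) :
    ∃ B : ℚ, ∀ m : ℕ, d + 3 ≤ m →
      |PowerSeries.coeff (R := ℚ) m
          (PowerSeries.X ^ d * (1 + PowerSeries.X ^ d)⁻¹ *
            ((1 - PowerSeries.C (R := ℚ) (q : ℚ) * PowerSeries.X ^ 2) *
              (1 + PowerSeries.X)) *
            (1 - PowerSeries.C (R := ℚ) (q : ℚ) * PowerSeries.X)⁻¹) -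
        ((1 - (q : ℚ) ^ (-(2 : ℤ))) / (1 + (q : ℚ) ^ (-(d : ℤ)))) *
          (q : ℚ) ^ (m - d)| ≤ B := by
  have hq0 : (q : ℚ) ≠ 0 := by positivity
  set P : Polynomial ℚ :=
    Polynomial.X ^ d * ((1 - Polynomial.C (q : ℚ) * Polynomial.X ^ 2) * (1 + Polynomial.X))
  set D : Polynomial ℚ := 1 + Polynomial.X ^ d
  have hD : D.eval (q : ℚ)⁻¹ ≠ 0 := by
    simp only [D, Polynomial.eval_add, Polynomial.eval_one, Polynomial.eval_pow,
      Polynomial.eval_X]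
    positivity
  have hD0 : D.coeff 0 ≠ 0 := by simp [D, Polynomial.coeff_X_pow, show 0 ≠ d by omega]
  have hF : (X ^ d * (1 + X ^ d)⁻¹ * ((1 - C (q : ℚ) * X ^ 2) * (1 + X)) *
      (1 - C (q : ℚ) * X)⁻¹ : ℚ⟦X⟧) = (P : ℚ⟦X⟧) * (D : ℚ⟦X⟧)⁻¹ * (1 - C (q : ℚ) * X)⁻¹ := by
    simp only [P, D]
    push_cast
    ring
  obtain ⟨Q, hQ⟩ := exists_coe_mul_inv_mul_inv_one_sub_C_mul_X_eq P D hq0 hD hD0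
  obtain ⟨B, hB⟩ := HasBoundedCoeffs.coe_mul
    ⟨1, abs_coeff_inv_one_add_X_pow_le_one (K := ℚ) (by omega : 0 < d)⟩ Q
  refine ⟨B, fun m hm => ?_⟩
  have hmain : P.eval (q : ℚ)⁻¹ / D.eval (q : ℚ)⁻¹ * (q : ℚ) ^ m =
      (1 - (q : ℚ) ^ (-(2 : ℤ))) / (1 + (q : ℚ) ^ (-(d : ℤ))) * (q : ℚ) ^ (m - d) := by
    obtain ⟨k, rfl⟩ := Nat.exists_eq_add_of_le (show d ≤ m by omega)
    simp only [P, D, Polynomial.eval_add, Polynomial.eval_one, Polynomial.eval_pow,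
      Polynomial.eval_X, Polynomial.eval_mul, Polynomial.eval_sub, Polynomial.eval_C, zpow_neg,
      zpow_natCast, inv_pow, Nat.add_sub_cancel_left]
    field_simp
    ring
  rw [hF, hQ, map_add, coeff_C_mul, coeff_inv_one_sub_C_mul_X, hmain, add_sub_cancel_left]
  simpa [D] using hB m
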